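/- Let Ω be a basis for a category J, let C be a dagger category with zero morphisms, and D : J ⥤ C a diagram. A limit cone (L, (l_A : L ⟶ D A)) of D is a dagger limit of (D, Ω) if and only if: l_A is a partial isometry for every A ∈ Ω, and l_B ∘ l_A† = 0 for all distinct A, B ∈ Ω. -/
import Mathlib


open CategoryTheory

universe v u v₁ u₁ v₂ u₂

class DaggerCategory (C : Type u) [Category.{v} C] where
  dag : ∀ {A B : C}, (A ⟶ B) → (B ⟶ A)
  dag_id : ∀ (A : C), dag (𝟙 A) = 𝟙 A
  dag_comp : ∀ {A B X : C} (f : A ⟶ B) (g : B ⟶ X), dag (f ≫ g) = dag g ≫ dag f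
  dag_dag : ∀ {A B : C} (f : A ⟶ B), dag (dag f) = f

postfix:max "†" => DaggerCategory.dag

section Defs

variable {C : Type u} [Category.{v} C] [DaggerCategory C]

/-- A morphism `f` is a partial isometry if `f ∘ f† ∘ f = f`. -/
def IsPartialIsometry {A B : C} (f : A ⟶ B) : Prop :=
  f ≫ f† ≫ f = f

/-- A morphism `f : A ⟶ B` is unitary if `f† ∘ f = 𝟙 A` and `f ∘ f† = 𝟙 B`. -/
def IsUnitary {A B : C} (f : A ⟶ B) : Prop :=
  f ≫ f† = 𝟙 A ∧ f† ≫ f = 𝟙 B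

/-- A morphism `f` is dagger monic (an isometry) if `f† ∘ f = 𝟙`. -/
def DaggerMonic {A B : C} (f : A ⟶ B) : Prop :=
  f ≫ f† = 𝟙 A

/-- `(L, l)` is a limit cone over the diagram `D`. -/
def IsLimitCone {J : Type u₁} [Category.{v₁} J] (D : J ⥤ C) (L : C)
    (l : ∀ j : J, L ⟶ D.obj j) : Prop :=
  (∀ {j j' : J} (f : j ⟶ j'), l j ≫ D.map f = l j') ∧
  (∀ (M : C) (m : ∀ j : J, M ⟶ D.obj j),
    (∀ {j j' : J} (f : j ⟶ j'), m j ≫ D.map f = m j') →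
    ∃! g : M ⟶ L, ∀ j : J, g ≫ l j = m j)

/-- A class of objects `Ω` is weakly initial when every object admits a morphism
from some member of `Ω`. -/
def WeaklyInitial {J : Type u₁} [Category.{v₁} J] (Ω : Set J) : Prop :=
  ∀ B : J, ∃ A ∈ Ω, Nonempty (A ⟶ B)

/-- `(L, l)` is a dagger limit of `(D, Ω)`: a limit cone whose legs at `Ω` are
partial isometries with pairwise commuting induced projections. -/
def IsDaggerLimit {J : Type u₁} [Category.{v₁} J] (D : J ⥤ C) (Ω : Set J) (L : C)
    (l : ∀ j : J, L ⟶ D.obj j) : Prop :=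
  IsLimitCone D L l ∧
  (∀ j ∈ Ω, IsPartialIsometry (l j)) ∧
  (∀ j ∈ Ω, ∀ j' ∈ Ω,
    (l j ≫ (l j)†) ≫ (l j' ≫ (l j')†) = (l j' ≫ (l j')†) ≫ (l j ≫ (l j)†))

end Defs

/-- A class `Ω` of objects of `J` is a basis when every object `B` admits a unique `A ∈ Ω`
with `J(A, B)` nonempty. -/
def IsBasis {J : Type u₁} [Category.{v₁} J] (Ω : Set J) : Prop :=
  ∀ B : J, ∃! A : J, A ∈ Ω ∧ Nonempty (A ⟶ B)

section AuxLemmas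

variable {C : Type u} [Category.{v} C] [DaggerCategory C] [Limits.HasZeroMorphisms C]

lemma dag_zero_aux {A B : C} : (0 : A ⟶ B)† = 0 := by
  have h1 : (0 : A ⟶ B) = (0 : A ⟶ A) ≫ ((0 : B ⟶ A)†) := by simp
  rw [h1, DaggerCategory.dag_comp, DaggerCategory.dag_dag]
  simp

end AuxLemmas

/-- Let `Ω` be a basis for `J` and `C` a dagger category with zero morphisms.
A limit cone `(L, l)` of `D : J ⥤ C` is a dagger limit of `(D, Ω)` iff `l_A` is a partial
isometry for every `A ∈ Ω` and `l_B ∘ l_A† = 0` for all distinct `A, B ∈ Ω`. -/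
theorem daggerLimit_iff_of_zeroMorphisms {C : Type u} [Category.{v} C] [DaggerCategory C]
    [Limits.HasZeroMorphisms C]
    {J : Type u₁} [Category.{v₁} J] (Ω : Set J) (hΩ : IsBasis Ω) (D : J ⥤ C)
    {L : C} (l : ∀ j : J, L ⟶ D.obj j) (hL : IsLimitCone D L l) :
    IsDaggerLimit D Ω L l ↔
      ((∀ j ∈ Ω, IsPartialIsometry (l j)) ∧
        ∀ j ∈ Ω, ∀ j' ∈ Ω, j ≠ j' → (l j)† ≫ l j' = 0) := by
  classical
  constructor
  · rintro ⟨-, hpi, hcomm⟩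
    refine ⟨hpi, ?_⟩
    intro A hA B hB hAB
    -- uniqueness of the basis element for each object
    have uniq : ∀ (j : J) {X Y : J}, X ∈ Ω → Y ∈ Ω → Nonempty (X ⟶ j) →
        Nonempty (Y ⟶ j) → X = Y := by
      intro j X Y hX hY h1 h2
      obtain ⟨Z, -, hZ⟩ := hΩ j
      exact (hZ X ⟨hX, h1⟩).trans (hZ Y ⟨hY, h2⟩).symm
    -- projection cones onto the component of a basis element
    have mkCone : ∀ (X : J), X ∈ Ω →
        ∃! q : L ⟶ L, ∀ j, q ≫ l j = if Nonempty (X ⟶ j) then l j else 0 := by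
      intro X hX
      apply hL.2
      intro j j' f
      by_cases h : Nonempty (X ⟶ j)
      · have h' : Nonempty (X ⟶ j') := ⟨h.some ≫ f⟩
        simp [h, h', hL.1 f]
      · have h' : ¬ Nonempty (X ⟶ j') := by
          intro h'
          obtain ⟨Z, ⟨hZ, hZj⟩, -⟩ := hΩ j
          have hZX : Z = X := uniq j' hZ hX ⟨hZj.some ≫ f⟩ h'
          exact h (hZX ▸ hZj)
        simp [h, h']
    obtain ⟨qA, hqA, -⟩ := mkCone A hA
    obtain ⟨qB, hqB, -⟩ := mkCone B hB
    -- uniqueness for the zero cone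
    have zuniq : ∀ g : L ⟶ L, (∀ j, g ≫ l j = 0) → g = 0 := by
      intro g hg
      obtain ⟨z, -, hz⟩ := hL.2 L (fun j => 0) (by intro j j' f; simp)
      exact (hz g hg).trans (hz 0 (fun j => by simp)).symm
    have hqBqA : qB ≫ qA = 0 := by
      apply zuniq
      intro j
      rw [Category.assoc, hqA j]
      by_cases h : Nonempty (A ⟶ j)
      · have h' : ¬ Nonempty (B ⟶ j) := fun h' => hAB (uniq j hA hB h h')
        rw [if_pos h, hqB j, if_neg h']
      · rw [if_neg h, Limits.comp_zero]
    have hqAlA : qA ≫ l A = l A := by rw [hqA A, if_pos ⟨𝟙 A⟩]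
    have hqBlB : qB ≫ l B = l B := by rw [hqB B, if_pos ⟨𝟙 B⟩]
    have hlaq : (l A)† ≫ qA† = (l A)† := by
      have h := congrArg DaggerCategory.dag hqAlA
      rwa [DaggerCategory.dag_comp] at h
    have hlbq : (l B)† ≫ qB† = (l B)† := by
      have h := congrArg DaggerCategory.dag hqBlB
      rwa [DaggerCategory.dag_comp] at h
    have hqq : qA† ≫ qB† = 0 := by
      rw [← DaggerCategory.dag_comp, hqBqA, dag_zero_aux]
    have comm := hcomm A hA B hB
    simp only [Category.assoc] at comm
    have h1 : (l A ≫ (l A)† ≫ l B ≫ (l B)†) ≫ qA† = l A ≫ (l A)† ≫ l B ≫ (l B)† := by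
      rw [comm]
      simp only [Category.assoc]
      rw [hlaq]
    have h2 : (l A ≫ (l A)† ≫ l B ≫ (l B)†) ≫ qB† = l A ≫ (l A)† ≫ l B ≫ (l B)† := by
      simp only [Category.assoc]
      rw [hlbq]
    have hr : l A ≫ (l A)† ≫ l B ≫ (l B)† = 0 := by
      conv_lhs => rw [← h2, ← h1]
      simp only [Category.assoc]
      rw [hqq]
      simp
    have hpiA := hpi A hA
    have hpiB := hpi B hB
    have hA2 : (l A)† ≫ l A ≫ (l A)† = (l A)† := by
      have h := congrArg DaggerCategory.dag hpiA
      simp only [DaggerCategory.dag_comp, DaggerCategory.dag_dag, Category.assoc] at h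
      exact h
    calc (l A)† ≫ l B
        = ((l A)† ≫ l A ≫ (l A)†) ≫ (l B ≫ (l B)† ≫ l B) := by
          rw [hA2, hpiB]
      _ = (l A)† ≫ (l A ≫ (l A)† ≫ l B ≫ (l B)†) ≫ l B := by
          simp only [Category.assoc]
      _ = (l A)† ≫ 0 ≫ l B := by rw [hr]
      _ = 0 := by simp
  · rintro ⟨hpi, horth⟩
    refine ⟨hL, hpi, ?_⟩
    intro j hj j' hj'
    by_cases h : j = j'
    · subst h; rfl
    · have h1 := horth j hj j' hj' h
      have h2 := horth j' hj' j hj (Ne.symm h)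
      calc (l j ≫ (l j)†) ≫ (l j' ≫ (l j')†)
          = l j ≫ ((l j)† ≫ l j') ≫ (l j')† := by simp only [Category.assoc]
        _ = 0 := by rw [h1]; simp
        _ = (l j' ≫ (l j')†) ≫ (l j ≫ (l j)†) := by
            have h3 : (l j' ≫ (l j')†) ≫ (l j ≫ (l j)†)
                = l j' ≫ ((l j')† ≫ l j) ≫ (l j)† := by
              simp only [Category.assoc]
            rw [h3, h2]
            simp
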